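/- Let β, β', γ ∈ ℂ with Re β > 0, Re β' > 0 and Re(γ − β − β') > 0. Then for all x, y ∈ ℂ, Horn's confluent series Φ_2(β, β'; γ; x, y) = Σ_{m=0}^∞ Σ_{n=0}^∞ [(β)_m (β')_n / ((γ)_{m+n} m! n!)] x^m y^n converges absolutely and equals [Γ(γ)/(Γ(β)Γ(β')Γ(γ−β−β'))] · ∫_{Δ_2} s^{β−1} t^{β'−1} (1−s−t)^{γ−β−β'−1} e^{sx+ty} ds dt, the integral being absolutely convergent. -/

import Mathlib

open MeasureTheory Complex

noncomputable section

/-- The Pochhammer symbol `(a)ₖ = a(a+1)⋯(a+k-1)`. -/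
def poch (a : ℂ) (k : ℕ) : ℂ := ∏ i ∈ Finset.range k, (a + i)

/-- The open two-dimensional simplex `{(s,t) : s > 0, t > 0, s + t < 1}`. -/
def openSimplex2 : Set (ℝ × ℝ) := {p | 0 < p.1 ∧ 0 < p.2 ∧ p.1 + p.2 < 1}

/-!
Expand `exp (s x + t y) = ∑ (s x)^m (t y)^n / (m! n!)` under the integral. The Dirichlet integral
`∫_{Δ₂} s^(u-1) t^(v-1) (1-s-t)^(w-1) = Γ(u) Γ(v) Γ(w) / Γ(u+v+w)` (Fubini and two beta integrals),
together with `Γ(a + k) = Γ(a) (a)_k`, turns the `(m, n)`-th term into the corresponding term of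
`Φ₂`. Dominated convergence with the majorant `|integrand| · exp (|x| + |y|)` justifies the
interchange, and the same majorant shows `∑ ∫ |term|` is finite, which dominates the series of
absolute values.
-/

open Set Nat

theorem hasSum_pow_div_factorial_mul_pow_div_factorial {𝔸 : Type*} [NormedField 𝔸]
    [NormedAlgebra ℚ 𝔸] [CompleteSpace 𝔸] (a b : 𝔸) :
    HasSum (fun q : ℕ × ℕ => a ^ q.1 / q.1 ! * (b ^ q.2 / q.2 !))
      (NormedSpace.exp (a + b)) := by
  have hab := summable_mul_of_summable_norm (NormedSpace.norm_expSeries_div_summable a)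
    (NormedSpace.norm_expSeries_div_summable b)
  have := (NormedSpace.expSeries_div_hasSum_exp a).mul
    (NormedSpace.expSeries_div_hasSum_exp b) hab
  rwa [NormedSpace.exp_add]

theorem hasSum_mul_pow_div_factorial_mul_pow_div_factorial (g a b : ℂ) :
    HasSum (fun q : ℕ × ℕ => g * (a ^ q.1 / q.1 ! * (b ^ q.2 / q.2 !)))
      (g * cexp (a + b)) := by
  rw [Complex.exp_eq_exp_ℂ]
  exact (hasSum_pow_div_factorial_mul_pow_div_factorial a b).mul_left g

theorem hasSum_norm_mul_pow_div_factorial_mul_pow_div_factorial (g a b : ℂ) :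
    HasSum (fun q : ℕ × ℕ => ‖g * (a ^ q.1 / q.1 ! * (b ^ q.2 / q.2 !))‖)
      (‖g‖ * Real.exp (‖a‖ + ‖b‖)) := by
  simp only [norm_mul, norm_div, norm_pow, Complex.norm_natCast, Real.exp_eq_exp_ℝ]
  exact (hasSum_pow_div_factorial_mul_pow_div_factorial ‖a‖ ‖b‖).mul_left ‖g‖

theorem poch_eq_eval_ascPochhammer (a : ℂ) (k : ℕ) :
    poch a k = (ascPochhammer ℂ k).eval a := by
  induction k with
  | zero => simp [poch]
  | succ k ih => rw [poch, Finset.prod_range_succ, ascPochhammer_succ_eval, ← ih, poch]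

theorem Gamma_add_nat_eq_Gamma_mul_poch {a : ℂ} (ha : ∀ k : ℕ, a ≠ -k) (n : ℕ) :
    Gamma (a + n) = Gamma a * poch a n := by
  rw [poch_eq_eval_ascPochhammer, ← Gamma_add_nat_div_Gamma_eq a ha,
    mul_div_cancel₀ _ (Gamma_ne_zero ha)]

theorem Complex.ne_neg_natCast_of_re_pos {a : ℂ} (ha : 0 < a.re) (k : ℕ) : a ≠ -k := by
  rintro rfl
  simp only [neg_re, natCast_re, Left.neg_pos_iff] at ha
  linarith [k.cast_nonneg (α := ℝ)]

theorem integrableOn_cpow_mul_sub_cpow {v w : ℂ} (hv : 0 < v.re) (hw : 0 < w.re) (c : ℝ) :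
    IntegrableOn (fun t : ℝ => (t : ℂ) ^ (v - 1) * ((c - t : ℝ) : ℂ) ^ (w - 1)) (Ioo 0 c) := by
  rcases le_or_gt c 0 with hc | hc
  · simp [Ioo_eq_empty_of_le hc]
  have h := ((betaIntegral_convergent hv hw).comp_mul_left (c := c⁻¹)).const_mul
    ((c : ℂ) ^ (v - 1) * (c : ℂ) ^ (w - 1))
  rw [zero_div, one_div, inv_inv, intervalIntegrable_iff_integrableOn_Ioo_of_le hc.le] at h
  refine h.congr_fun (fun t ht => ?_) measurableSet_Ioo
  have hct : 0 ≤ c⁻¹ * t := by have := ht.1; positivity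
  have hct' : 0 ≤ 1 - c⁻¹ * t := by
    rw [sub_nonneg, inv_mul_le_iff₀ hc, mul_one]; exact ht.2.le
  dsimp only
  rw [mul_mul_mul_comm, ← mul_cpow_ofReal_nonneg hc.le hct,
    show (1 : ℂ) - ((c⁻¹ * t : ℝ) : ℂ) = ((1 - c⁻¹ * t : ℝ) : ℂ) by push_cast; ring,
    ← mul_cpow_ofReal_nonneg hc.le hct', ← ofReal_mul, ← ofReal_mul,
    mul_inv_cancel_left₀ hc.ne', mul_sub, mul_one, mul_inv_cancel_left₀ hc.ne']

theorem setIntegral_Ioo_cpow_mul_sub_cpow (v w : ℂ) {c : ℝ} (hc : 0 < c) :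
    ∫ t in Ioo 0 c, (t : ℂ) ^ (v - 1) * ((c - t : ℝ) : ℂ) ^ (w - 1) =
      (c : ℂ) ^ (v + w - 1) * betaIntegral v w := by
  rw [← betaIntegral_scaled v w hc, intervalIntegral.integral_of_le hc.le,
    integral_Ioc_eq_integral_Ioo]
  push_cast
  rfl

def dirichletIntegrand (u v w : ℂ) (p : ℝ × ℝ) : ℂ :=
  (p.1 : ℂ) ^ (u - 1) * (p.2 : ℂ) ^ (v - 1) * ((1 - p.1 - p.2 : ℝ) : ℂ) ^ (w - 1)

theorem isOpen_openSimplex2 : IsOpen openSimplex2 :=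
  (isOpen_lt continuous_const continuous_fst).inter <|
    (isOpen_lt continuous_const continuous_snd).inter <|
      isOpen_lt (continuous_fst.add continuous_snd) continuous_const

theorem measurableSet_openSimplex2 : MeasurableSet openSimplex2 :=
  isOpen_openSimplex2.measurableSet

theorem continuousOn_dirichletIntegrand (u v w : ℂ) :
    ContinuousOn (dirichletIntegrand u v w) openSimplex2 := by
  have hcpow : ∀ {f : ℝ × ℝ → ℝ}, Continuous f → (∀ p ∈ openSimplex2, 0 < f p) → ∀ z : ℂ,
      ContinuousOn (fun p => (f p : ℂ) ^ z) openSimplex2 := fun hf hpos z =>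
    (continuous_ofReal.comp hf).continuousOn.cpow_const fun p hp =>
      ofReal_mem_slitPlane.2 (hpos p hp)
  refine ((hcpow continuous_fst (fun p hp => hp.1) _).mul
    (hcpow continuous_snd (fun p hp => hp.2.1) _)).mul
    (hcpow (by fun_prop) (fun p hp => by linarith [hp.2.2]) _)

theorem mem_openSimplex2_iff {s t : ℝ} :
    (s, t) ∈ openSimplex2 ↔ s ∈ Ioo 0 1 ∧ t ∈ Ioo 0 (1 - s) := by
  change 0 < s ∧ 0 < t ∧ s + t < 1 ↔ _
  constructor
  · rintro ⟨h₁, h₂, h₃⟩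
    exact ⟨⟨h₁, by linarith⟩, h₂, by linarith⟩
  · rintro ⟨⟨h₁, -⟩, h₂, h₃⟩
    exact ⟨h₁, h₂, by linarith⟩

theorem indicator_openSimplex2_dirichletIntegrand (u v w : ℂ) (s t : ℝ) :
    openSimplex2.indicator (dirichletIntegrand u v w) (s, t) =
      (Ioo 0 1).indicator (fun s : ℝ => (s : ℂ) ^ (u - 1)) s *
        (Ioo 0 (1 - s)).indicator
          (fun t : ℝ => (t : ℂ) ^ (v - 1) * ((1 - s - t : ℝ) : ℂ) ^ (w - 1)) t := by
  by_cases hs : s ∈ Ioo 0 1 <;> by_cases ht : t ∈ Ioo 0 (1 - s) <;>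
    simp [mem_openSimplex2_iff, hs, ht, dirichletIntegrand, mul_assoc]

theorem integral_indicator_openSimplex2_dirichletIntegrand_slice (u v w : ℂ) (s : ℝ) :
    ∫ t, openSimplex2.indicator (dirichletIntegrand u v w) (s, t) =
      (Ioo 0 1).indicator
          (fun s : ℝ => (s : ℂ) ^ (u - 1) * ((1 - s : ℝ) : ℂ) ^ (v + w - 1)) s *
        betaIntegral v w := by
  simp_rw [indicator_openSimplex2_dirichletIntegrand, integral_const_mul,
    integral_indicator measurableSet_Ioo]
  by_cases hs : s ∈ Ioo 0 1
  · rw [indicator_of_mem hs, indicator_of_mem hs,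
      setIntegral_Ioo_cpow_mul_sub_cpow v w (sub_pos.2 hs.2), mul_assoc]
  · simp [indicator_of_notMem hs]

theorem integrable_indicator_openSimplex2_dirichletIntegrand_slice (u : ℂ) {v w : ℂ}
    (hv : 0 < v.re) (hw : 0 < w.re) (s : ℝ) :
    Integrable (fun t => openSimplex2.indicator (dirichletIntegrand u v w) (s, t)) := by
  simp_rw [indicator_openSimplex2_dirichletIntegrand]
  exact ((integrable_indicator_iff measurableSet_Ioo).2
    (integrableOn_cpow_mul_sub_cpow hv hw _)).const_mul _

theorem norm_dirichletIntegrand {u v w : ℂ} {p : ℝ × ℝ} (hp : p ∈ openSimplex2) :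
    ‖dirichletIntegrand u v w p‖ = (dirichletIntegrand u.re v.re w.re p).re := by
  obtain ⟨h₁, h₂, h₃⟩ := hp
  have h₄ : 0 < 1 - p.1 - p.2 := by linarith
  simp only [dirichletIntegrand, norm_mul, norm_cpow_eq_rpow_re_of_pos h₁,
    norm_cpow_eq_rpow_re_of_pos h₂, norm_cpow_eq_rpow_re_of_pos h₄]
  rw [← ofReal_one, ← ofReal_sub, ← ofReal_sub, ← ofReal_sub, ← ofReal_cpow h₁.le,
    ← ofReal_cpow h₂.le, ← ofReal_cpow h₄.le]
  simp

theorem norm_indicator_openSimplex2_dirichletIntegrand (u v w : ℂ) (p : ℝ × ℝ) :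
    ‖openSimplex2.indicator (dirichletIntegrand u v w) p‖ =
      (openSimplex2.indicator (dirichletIntegrand u.re v.re w.re) p).re := by
  by_cases hp : p ∈ openSimplex2
  · rw [indicator_of_mem hp, indicator_of_mem hp, norm_dirichletIntegrand hp]
  · simp [indicator_of_notMem hp]

theorem integrableOn_dirichletIntegrand {u v w : ℂ} (hu : 0 < u.re) (hv : 0 < v.re)
    (hw : 0 < w.re) : IntegrableOn (dirichletIntegrand u v w) openSimplex2 := by
  rw [← integrable_indicator_iff measurableSet_openSimplex2, Measure.volume_eq_prod,
    integrable_prod_iff]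
  · refine ⟨.of_forall (integrable_indicator_openSimplex2_dirichletIntegrand_slice u hv hw), ?_⟩
    -- The norm of the integrand is the integrand with the real parts as exponents, so the
    -- inner integrals of the norm are again computed by the slice formula.
    have hv' : 0 < (v.re : ℂ).re := hv
    have hw' : 0 < (w.re : ℂ).re := hw
    have hslice (s : ℝ) :
        ∫ t, (openSimplex2.indicator (dirichletIntegrand u.re v.re w.re) (s, t)).re =
          ((Ioo 0 1).indicator (fun s : ℝ => (s : ℂ) ^ ((u.re : ℂ) - 1) *
            ((1 - s : ℝ) : ℂ) ^ ((v.re : ℂ) + w.re - 1)) s * betaIntegral v.re w.re).re := by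
      rw [← integral_indicator_openSimplex2_dirichletIntegrand_slice]
      exact integral_re (integrable_indicator_openSimplex2_dirichletIntegrand_slice _ hv' hw' _)
    simp_rw [norm_indicator_openSimplex2_dirichletIntegrand, hslice]
    have hbeta : IntegrableOn (fun s : ℝ => (s : ℂ) ^ ((u.re : ℂ) - 1) *
        ((1 - s : ℝ) : ℂ) ^ ((v.re : ℂ) + w.re - 1)) (Ioo 0 1) :=
      integrableOn_cpow_mul_sub_cpow (by simpa using hu) (by simp only [add_re, ofReal_re]; linarith) 1
    exact ((hbeta.integrable_indicator measurableSet_Ioo).mul_const _).re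
  · rw [← Measure.volume_eq_prod, aestronglyMeasurable_indicator_iff measurableSet_openSimplex2]
    exact (continuousOn_dirichletIntegrand u v w).aestronglyMeasurable measurableSet_openSimplex2

theorem setIntegral_openSimplex2_dirichletIntegrand {u v w : ℂ} (hu : 0 < u.re)
    (hv : 0 < v.re) (hw : 0 < w.re) :
    ∫ p in openSimplex2, dirichletIntegrand u v w p =
      Gamma u * Gamma v * Gamma w / Gamma (u + v + w) := by
  have hvw : 0 < (v + w).re := by rw [add_re]; linarith
  have hint := (integrable_indicator_iff measurableSet_openSimplex2).2
    (integrableOn_dirichletIntegrand hu hv hw)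
  rw [Measure.volume_eq_prod] at hint
  rw [← integral_indicator measurableSet_openSimplex2, Measure.volume_eq_prod,
    integral_prod _ hint]
  simp_rw [integral_indicator_openSimplex2_dirichletIntegrand_slice]
  rw [integral_mul_const, integral_indicator measurableSet_Ioo]
  have := setIntegral_Ioo_cpow_mul_sub_cpow u (v + w) one_pos
  simp only [ofReal_one, one_cpow, one_mul] at this
  rw [this, betaIntegral_eq_Gamma_mul_div _ _ hu hvw, betaIntegral_eq_Gamma_mul_div _ _ hv hw,
    ← add_assoc]
  field_simp [Gamma_ne_zero_of_re_pos hvw]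

section ExpSeriesUnderIntegral

variable {α : Type*} [MeasurableSpace α] {μ : Measure α} {g a b : α → ℂ}

theorem integrable_mul_cexp_add (hg : AEStronglyMeasurable g μ) (ha : AEStronglyMeasurable a μ)
    (hb : AEStronglyMeasurable b μ)
    (hbound : Integrable (fun p => ‖g p‖ * Real.exp (‖a p‖ + ‖b p‖)) μ) :
    Integrable (fun p => g p * cexp (a p + b p)) μ := by
  refine hbound.mono' (by fun_prop) (.of_forall fun p => ?_)
  rw [norm_mul, norm_exp]
  gcongr
  exact (re_le_norm _).trans (norm_add_le _ _)

variable (hg : AEStronglyMeasurable g μ) (ha : AEStronglyMeasurable a μ)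
    (hb : AEStronglyMeasurable b μ)
    (hbound : Integrable (fun p => ‖g p‖ * Real.exp (‖a p‖ + ‖b p‖)) μ)
include hg ha hb hbound

theorem hasSum_integral_mul_pow_div_factorial_mul_pow_div_factorial :
    HasSum (fun q : ℕ × ℕ => ∫ p, g p * (a p ^ q.1 / q.1 ! * (b p ^ q.2 / q.2 !)) ∂μ)
      (∫ p, g p * cexp (a p + b p) ∂μ) := by
  have hnorm p := hasSum_norm_mul_pow_div_factorial_mul_pow_div_factorial (g p) (a p) (b p)
  refine hasSum_integral_of_dominated_convergence _ (fun q => by fun_prop)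
    (fun q => .of_forall fun p => le_rfl) (.of_forall fun p => (hnorm p).summable) ?_
    (.of_forall fun p => hasSum_mul_pow_div_factorial_mul_pow_div_factorial _ _ _)
  simpa only [(hnorm _).tsum_eq] using hbound

theorem summable_integral_norm_mul_pow_div_factorial_mul_pow_div_factorial :
    Summable (fun q : ℕ × ℕ => ∫ p, ‖g p * (a p ^ q.1 / q.1 ! * (b p ^ q.2 / q.2 !))‖ ∂μ) := by
  have hnorm p := hasSum_norm_mul_pow_div_factorial_mul_pow_div_factorial (g p) (a p) (b p)
  refine (hasSum_integral_of_dominated_convergence _ (fun q => by fun_prop)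
    (fun q => .of_forall fun p => (norm_norm _).le) (.of_forall fun p => (hnorm p).summable) ?_
    (.of_forall hnorm)).summable
  simpa only [(hnorm _).tsum_eq] using hbound

end ExpSeriesUnderIntegral

theorem dirichletIntegrand_mul_pow_mul_pow (u v w : ℂ) {p : ℝ × ℝ} (hp : p ∈ openSimplex2)
    (m n : ℕ) :
    dirichletIntegrand u v w p * ((p.1 : ℂ) ^ m * (p.2 : ℂ) ^ n) =
      dirichletIntegrand (u + m) (v + n) w p := by
  have h₁ : (p.1 : ℂ) ≠ 0 := ofReal_ne_zero.2 hp.1.ne'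
  have h₂ : (p.2 : ℂ) ≠ 0 := ofReal_ne_zero.2 hp.2.1.ne'
  simp only [dirichletIntegrand, add_sub_right_comm _ (m : ℂ), add_sub_right_comm _ (n : ℂ),
    cpow_add _ _ h₁, cpow_add _ _ h₂, cpow_natCast]
  ring

theorem integrable_norm_dirichletIntegrand_mul_exp {u v w : ℂ} (hu : 0 < u.re) (hv : 0 < v.re)
    (hw : 0 < w.re) (x y : ℂ) :
    Integrable (fun p : ℝ × ℝ => ‖dirichletIntegrand u v w p‖ *
      Real.exp (‖(p.1 : ℂ) * x‖ + ‖(p.2 : ℂ) * y‖)) (volume.restrict openSimplex2) := by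
  have hI := integrableOn_dirichletIntegrand hu hv hw
  refine (hI.norm.mul_const (Real.exp (‖x‖ + ‖y‖))).mono' ?_ ?_
  · exact hI.aestronglyMeasurable.norm.mul (by fun_prop)
  · refine (ae_restrict_mem measurableSet_openSimplex2).mono fun p ⟨h₁, h₂, h₃⟩ => ?_
    rw [norm_mul, norm_norm, Real.norm_of_nonneg (Real.exp_pos _).le]
    gcongr <;> rw [norm_mul, norm_real, Real.norm_of_nonneg (by positivity)] <;>
      apply mul_le_of_le_one_left (norm_nonneg _) <;> linarith

theorem setIntegral_openSimplex2_dirichletIntegrand_mul_pow_div_factorial {u v w : ℂ}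
    (hu : 0 < u.re) (hv : 0 < v.re) (hw : 0 < w.re) (x y : ℂ) (m n : ℕ) :
    ∫ p in openSimplex2,
        dirichletIntegrand u v w p * ((p.1 * x) ^ m / m ! * ((p.2 * y) ^ n / n !)) =
      x ^ m * y ^ n / (m ! * n !) *
        (Gamma (u + m) * Gamma (v + n) * Gamma w / Gamma (u + m + (v + n) + w)) := by
  have hum : 0 < (u + m).re := by rw [add_re, natCast_re]; positivity
  have hvn : 0 < (v + n).re := by rw [add_re, natCast_re]; positivity
  rw [← setIntegral_openSimplex2_dirichletIntegrand hum hvn hw, ← integral_const_mul]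
  refine setIntegral_congr_fun measurableSet_openSimplex2 fun p hp => ?_
  rw [← dirichletIntegrand_mul_pow_mul_pow u v w hp]
  ring

theorem poch_mul_poch_div_poch_eq_Gamma {u v w : ℂ} (hu : 0 < u.re) (hv : 0 < v.re)
    (hw : 0 < w.re) (m n : ℕ) :
    poch u m * poch v n / poch (u + v + w) (m + n) =
      Gamma (u + v + w) / (Gamma u * Gamma v * Gamma w) *
        (Gamma (u + m) * Gamma (v + n) * Gamma w / Gamma (u + m + (v + n) + w)) := by
  have huvw : 0 < (u + v + w).re := by rw [add_re, add_re]; linarith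
  have hΓ : Gamma (u + v + w + (m + n : ℕ)) ≠ 0 :=
    Gamma_ne_zero_of_re_pos (by simp only [Nat.cast_add, add_re, natCast_re]; positivity)
  rw [show u + m + (v + n) + w = u + v + w + (m + n : ℕ) by push_cast; ring]
  rw [Gamma_add_nat_eq_Gamma_mul_poch (ne_neg_natCast_of_re_pos huvw)] at hΓ ⊢
  rw [Gamma_add_nat_eq_Gamma_mul_poch (ne_neg_natCast_of_re_pos hu),
    Gamma_add_nat_eq_Gamma_mul_poch (ne_neg_natCast_of_re_pos hv)]
  have := Gamma_ne_zero_of_re_pos hu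
  have := Gamma_ne_zero_of_re_pos hv
  have := Gamma_ne_zero_of_re_pos hw
  have := left_ne_zero_of_mul hΓ
  have := right_ne_zero_of_mul hΓ
  field_simp

theorem poch_mul_poch_div_mul_pow_mul_pow_eq_integral {u v w : ℂ} (hu : 0 < u.re)
    (hv : 0 < v.re) (hw : 0 < w.re) (x y : ℂ) (m n : ℕ) :
    poch u m * poch v n / (poch (u + v + w) (m + n) * (m ! : ℂ) * (n ! : ℂ)) * x ^ m * y ^ n =
      Gamma (u + v + w) / (Gamma u * Gamma v * Gamma w) * ∫ p in openSimplex2,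
        dirichletIntegrand u v w p * ((p.1 * x) ^ m / m ! * ((p.2 * y) ^ n / n !)) := by
  rw [setIntegral_openSimplex2_dirichletIntegrand_mul_pow_div_factorial hu hv hw]
  linear_combination (x ^ m * y ^ n / (m ! * n !)) * poch_mul_poch_div_poch_eq_Gamma hu hv hw m n

theorem stmt8 (β β' γ : ℂ) (hβ : 0 < β.re) (hβ' : 0 < β'.re)
    (hγ : 0 < (γ - β - β').re) (x y : ℂ) :
    Summable (fun p : ℕ × ℕ =>
      ‖poch β p.1 * poch β' p.2 /
          (poch γ (p.1 + p.2) * (Nat.factorial p.1 : ℂ) * (Nat.factorial p.2 : ℂ)) *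
          x ^ p.1 * y ^ p.2‖) ∧
    IntegrableOn
      (fun p : ℝ × ℝ =>
        (p.1 : ℂ) ^ (β - 1) * (p.2 : ℂ) ^ (β' - 1) *
          ((1 - p.1 - p.2 : ℝ) : ℂ) ^ (γ - β - β' - 1) *
          Complex.exp ((p.1 : ℂ) * x + (p.2 : ℂ) * y))
      openSimplex2 ∧
    (∑' p : ℕ × ℕ,
        poch β p.1 * poch β' p.2 /
          (poch γ (p.1 + p.2) * (Nat.factorial p.1 : ℂ) * (Nat.factorial p.2 : ℂ)) *
          x ^ p.1 * y ^ p.2)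
      = Complex.Gamma γ /
          (Complex.Gamma β * Complex.Gamma β' * Complex.Gamma (γ - β - β')) *
          ∫ p in openSimplex2,
            (p.1 : ℂ) ^ (β - 1) * (p.2 : ℂ) ^ (β' - 1) *
              ((1 - p.1 - p.2 : ℝ) : ℂ) ^ (γ - β - β' - 1) *
              Complex.exp ((p.1 : ℂ) * x + (p.2 : ℂ) * y) := by
  obtain ⟨w, hw, rfl⟩ : ∃ w, 0 < w.re ∧ γ = β + β' + w := ⟨γ - β - β', hγ, by ring⟩
  rw [show β + β' + w - β - β' = w by ring]
  have hterm (q : ℕ × ℕ) := poch_mul_poch_div_mul_pow_mul_pow_eq_integral hβ hβ' hw x y q.1 q.2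
  have hg : AEStronglyMeasurable (dirichletIntegrand β β' w) (volume.restrict openSimplex2) :=
    (continuousOn_dirichletIntegrand β β' w).aestronglyMeasurable measurableSet_openSimplex2
  have ha : AEStronglyMeasurable (fun p : ℝ × ℝ => (p.1 : ℂ) * x)
    (volume.restrict openSimplex2) := by fun_prop
  have hb : AEStronglyMeasurable (fun p : ℝ × ℝ => (p.2 : ℂ) * y)
    (volume.restrict openSimplex2) := by fun_prop
  have hbound := integrable_norm_dirichletIntegrand_mul_exp hβ hβ' hw x y
  refine ⟨?_, integrable_mul_cexp_add hg ha hb hbound, ?_⟩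
  · refine .of_nonneg_of_le (fun _ => norm_nonneg _) (fun q => ?_)
      ((summable_integral_norm_mul_pow_div_factorial_mul_pow_div_factorial hg ha hb
        hbound).mul_left ‖Gamma (β + β' + w) / (Gamma β * Gamma β' * Gamma w)‖)
    rw [hterm, norm_mul]
    gcongr
    exact norm_integral_le_integral_norm _
  · rw [tsum_congr hterm, tsum_mul_left,
      (hasSum_integral_mul_pow_div_factorial_mul_pow_div_factorial hg ha hb hbound).tsum_eq]
    rfl
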